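/- With R = K⟦f₁,…,f_s⟧ as in the context, for every f ∈ K⟦x⟧ there exist g ∈ R and r ∈ K⟦x⟧ such that: (i) f = g + r; (ii) if g ≠ 0 then o(g) ≥ o(f), and if r ≠ 0 then o(r) ≥ o(f); (iii) supp(r) ⊆ ℕ∖⟨o(f₁),…,o(f_s)⟩. -/

import Mathlib

set_option synthInstance.maxHeartbeats 1000000
set_option maxHeartbeats 1000000

open PowerSeries

/-- The order of a formal power series: the least `i` such that the coefficient of `x^i`
is nonzero (junk value `0` for the zero series). -/
noncomputable def ord (K : Type*) [Field K] (f : PowerSeries K) : ℕ :=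
  sInf {i | coeff i f ≠ 0}

/-- The set of orders of nonzero elements of a subalgebra `R ⊆ K⟦x⟧`. -/
def oSet (K : Type*) [Field K] (R : Subalgebra K (PowerSeries K)) : Set ℕ :=
  {n | ∃ f ∈ R, f ≠ 0 ∧ ord K f = n}

/-- The quotient `K⟦x⟧/R` has finite length as an `R`-module. -/
def FiniteLengthQuot (K : Type*) [Field K] (R : Subalgebra K (PowerSeries K)) : Prop :=
  IsFiniteLength R (PowerSeries K ⧸ LinearMap.range (Algebra.linearMap R (PowerSeries K)))

/-- The closure of a subalgebra of `K⟦x⟧` in the `x`-adic topology: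
`f` belongs to the closure of `S` iff for every `n` there is an element of `S`
agreeing with `f` on all coefficients up to `n`. -/
def adicClosure {K : Type*} [Field K] (S : Subalgebra K (PowerSeries K)) :
    Subalgebra K (PowerSeries K) where
  carrier := {f | ∀ n : ℕ, ∃ p ∈ S, ∀ i ≤ n, coeff i f = coeff i p}
  add_mem' := by
    intro f g hf hg n
    obtain ⟨p, hpS, hp⟩ := hf n
    obtain ⟨q, hqS, hq⟩ := hg n
    exact ⟨p + q, S.add_mem hpS hqS, fun i hi => by
      simp [map_add, hp i hi, hq i hi]⟩
  mul_mem' := by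
    intro f g hf hg n
    obtain ⟨p, hpS, hp⟩ := hf n
    obtain ⟨q, hqS, hq⟩ := hg n
    refine ⟨p * q, S.mul_mem hpS hqS, fun i hi => ?_⟩
    rw [coeff_mul, coeff_mul]
    refine Finset.sum_congr rfl fun ab hab => ?_
    have h : ab.1 + ab.2 = i := by simpa using hab
    rw [hp ab.1 (by omega), hq ab.2 (by omega)]
  algebraMap_mem' := fun r => fun n => ⟨algebraMap K _ r, S.algebraMap_mem r, fun i _ => rfl⟩

/-- `K⟦f₁,…,f_s⟧`, the subalgebra of `K⟦x⟧` consisting of all power series of the form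
`P(f₁,…,f_s)` with `P ∈ K⟦X₁,…,X_s⟧` (for `fᵢ` of positive order), realized as the
`x`-adic closure of the subalgebra generated by `f₁, …, f_s`; this closure coincides with
the image of the substitution homomorphism `K⟦X₁,…,X_s⟧ → K⟦x⟧`, `Xᵢ ↦ fᵢ`. -/
noncomputable def seriesAlgebra {K : Type*} [Field K] {s : ℕ} (f : Fin s → PowerSeries K) :
    Subalgebra K (PowerSeries K) :=
  adicClosure (Algebra.adjoin K (Set.range f))

/-!
Division algorithm: starting from `F`, for `n = 0, 1, 2, …` in turn, if `n` is the order of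
some nonzero `e ∈ S`, subtract the multiple of `e` that kills the coefficient of `x^n` of the
current remainder. This never changes coefficients below `n`, so the remainders converge
coefficientwise to a series `r` whose support avoids the orders of `S`, and `F - r` is an
`x`-adic limit of elements of `S`. Nothing is subtracted below `o(F)`, which gives the order
bounds. For `S = K[f₁,…,f_s]` the orders of `S` contain `⟨o(f₁),…,o(f_s)⟩` since orders add
under multiplication.
-/

section Ord

variable {K : Type*} [Field K] {f g : PowerSeries K}

lemma coeff_ord_ne_zero (hf : f ≠ 0) : coeff (ord K f) f ≠ 0 :=
  Nat.sInf_mem (exists_coeff_ne_zero_iff_ne_zero.mpr hf)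

lemma coeff_of_lt_ord {i : ℕ} (hi : i < ord K f) : coeff i f = 0 := by
  by_contra h
  exact Nat.notMem_of_lt_sInf hi h

lemma order_eq_ord (hf : f ≠ 0) : f.order = ord K f :=
  order_eq_nat.mpr ⟨coeff_ord_ne_zero hf, fun _ hi => coeff_of_lt_ord hi⟩

lemma le_ord_of_coeff_eq_zero {n : ℕ} (hf : f ≠ 0) (h : ∀ i < n, coeff i f = 0) :
    n ≤ ord K f := by
  by_contra hlt
  exact coeff_ord_ne_zero hf (h _ (not_le.mp hlt))

lemma ord_one : ord K 1 = 0 :=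
  Nat.sInf_eq_zero.mpr (Or.inl (by simp))

lemma ord_mul (hf : f ≠ 0) (hg : g ≠ 0) : ord K (f * g) = ord K f + ord K g := by
  have h := order_mul f g
  rw [order_eq_ord hf, order_eq_ord hg, order_eq_ord (mul_ne_zero hf hg)] at h
  exact_mod_cast h

end Ord

/-- The semigroup of values of a subalgebra of `K⟦x⟧`. -/
def ordSubmonoid (K : Type*) [Field K] (S : Subalgebra K (PowerSeries K)) : AddSubmonoid ℕ where
  carrier := oSet K S
  add_mem' := by
    rintro _ _ ⟨a, haS, ha0, rfl⟩ ⟨b, hbS, hb0, rfl⟩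
    exact ⟨a * b, S.mul_mem haS hbS, mul_ne_zero ha0 hb0, ord_mul ha0 hb0⟩
  zero_mem' := ⟨1, S.one_mem, one_ne_zero, ord_one⟩

lemma closure_range_ord_le_ordSubmonoid {K : Type*} [Field K] {s : ℕ}
    {f : Fin s → PowerSeries K} (hf0 : ∀ i, f i ≠ 0) :
    AddSubmonoid.closure (Set.range fun j => ord K (f j)) ≤
      ordSubmonoid K (Algebra.adjoin K (Set.range f)) :=
  AddSubmonoid.closure_le.mpr <| Set.range_subset_iff.mpr fun j =>
    ⟨f j, Algebra.subset_adjoin ⟨j, rfl⟩, hf0 j, rfl⟩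

section Division

variable {K : Type*} [Field K] (E : ℕ → PowerSeries K) (Γ : Set ℕ) (F : PowerSeries K)

open scoped Classical in
noncomputable def remSeq : ℕ → PowerSeries K
  | 0 => F
  | n + 1 => remSeq n -
      if n ∈ Γ then (coeff n (remSeq n) / coeff n (E n)) • E n else 0

variable {E Γ F}

lemma coeff_remSeq_succ_of_lt (hE : ∀ n ∈ Γ, (E n).order = n) {i n : ℕ} (hi : i < n) :
    coeff i (remSeq E Γ F (n + 1)) = coeff i (remSeq E Γ F n) := by
  rw [remSeq, map_sub]
  split_ifs with hn
  · rw [map_smul, coeff_of_lt_order (φ := E n) i (by rw [hE n hn]; exact_mod_cast hi), smul_zero,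
      sub_zero]
  · rw [map_zero, sub_zero]

lemma coeff_remSeq_of_lt (hE : ∀ n ∈ Γ, (E n).order = n) {i m : ℕ} (hi : i < m) :
    coeff i (remSeq E Γ F m) = coeff i (remSeq E Γ F (i + 1)) := by
  induction m, hi using Nat.le_induction with
  | base => rfl
  | succ m hm ih => rw [coeff_remSeq_succ_of_lt hE hm, ih]

lemma coeff_remSeq_succ_self (hE : ∀ n ∈ Γ, (E n).order = n) {n : ℕ} (hn : n ∈ Γ) :
    coeff n (remSeq E Γ F (n + 1)) = 0 := by
  have hEn : coeff n (E n) ≠ 0 := (order_eq_nat.mp (hE n hn)).1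
  rw [remSeq, if_pos hn, map_sub, map_smul, smul_eq_mul, div_mul_cancel₀ _ hEn, sub_self]

lemma coeff_remSeq_of_lt_ord (hE : ∀ n ∈ Γ, (E n).order = n) {i : ℕ} (hi : i < ord K F)
    (m : ℕ) : coeff i (remSeq E Γ F m) = 0 := by
  induction m generalizing i with
  | zero => exact coeff_of_lt_ord hi
  | succ m ih =>
    rcases lt_or_ge i m with him | hmi
    · rw [coeff_remSeq_succ_of_lt hE him, ih hi]
    · -- for `m < o(F)` the coefficient being cancelled is already zero
      have hm : coeff m (remSeq E Γ F m) = 0 := ih (hmi.trans_lt hi)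
      rw [remSeq, hm, zero_div, zero_smul, ite_self, sub_zero, ih hi]

lemma sub_remSeq_mem {S : Subalgebra K (PowerSeries K)} (hES : ∀ n ∈ Γ, E n ∈ S) (m : ℕ) :
    F - remSeq E Γ F m ∈ S := by
  induction m with
  | zero => simp [remSeq]
  | succ m ih =>
    rw [remSeq, sub_sub_eq_add_sub, add_sub_right_comm]
    refine S.add_mem ih ?_
    split_ifs with hm
    · exact S.smul_mem (hES m hm) _
    · exact S.zero_mem

end Division

theorem exists_adicClosure_add_remainder {K : Type*} [Field K]
    (S : Subalgebra K (PowerSeries K)) (F : PowerSeries K) :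
    ∃ g ∈ adicClosure S, ∃ r : PowerSeries K, F = g + r ∧
      (∀ i < ord K F, coeff i g = 0) ∧ (∀ i < ord K F, coeff i r = 0) ∧
      ∀ i ∈ ordSubmonoid K S, coeff i r = 0 := by
  have hE : ∀ n ∈ oSet K S, ∃ e ∈ S, e.order = n := by
    rintro _ ⟨e, heS, he0, rfl⟩
    exact ⟨e, heS, order_eq_ord he0⟩
  choose! E hES hEord using hE
  set R := remSeq E (oSet K S) F
  set r := PowerSeries.mk fun i => coeff i (R (i + 1))
  have hr : ∀ i < ord K F, coeff i r = 0 := fun i hi => by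
    simpa [r] using coeff_remSeq_of_lt_ord hEord hi (i + 1)
  refine ⟨F - r, fun n => ⟨F - R (n + 1), sub_remSeq_mem hES _, fun i hi => ?_⟩, r,
    (sub_add_cancel F r).symm, fun i hi => ?_, hr, fun i hi => ?_⟩
  · rw [map_sub, map_sub, coeff_mk, coeff_remSeq_of_lt hEord (Nat.lt_succ_of_le hi)]
  · rw [map_sub, hr i hi, coeff_of_lt_ord hi, sub_zero]
  · exact (coeff_mk _ _).trans (coeff_remSeq_succ_self hEord hi)

theorem stmt_4_general (K : Type*) [Field K] {s : ℕ} (f : Fin s → PowerSeries K)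
    (hf0 : ∀ i, f i ≠ 0) (F : PowerSeries K) :
    ∃ g ∈ seriesAlgebra f, ∃ r : PowerSeries K,
      F = g + r ∧
      (g ≠ 0 → ord K F ≤ ord K g) ∧
      (r ≠ 0 → ord K F ≤ ord K r) ∧
      (∀ i : ℕ, coeff i r ≠ 0 →
        i ∉ AddSubmonoid.closure (Set.range fun j => ord K (f j))) := by
  obtain ⟨g, hg, r, hFgr, hg0, hr0, hrΓ⟩ :=
    exists_adicClosure_add_remainder (Algebra.adjoin K (Set.range f)) F
  exact ⟨g, hg, r, hFgr, fun hg' => le_ord_of_coeff_eq_zero hg' hg0,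
    fun hr' => le_ord_of_coeff_eq_zero hr' hr0,
    fun i hi hiΓ => hi (hrΓ i (closure_range_ord_le_ordSubmonoid hf0 hiΓ))⟩

/-- Division with remainder in `R = K⟦f₁,…,f_s⟧`: every `f ∈ K⟦x⟧` can be written as
`f = g + r` with `g ∈ R`, `o(g) ≥ o(f)` and `o(r) ≥ o(f)` (when nonzero), and the support
of `r` contained in `ℕ ∖ ⟨o(f₁),…,o(f_s)⟩`. -/
theorem stmt_4 (K : Type*) [Field K] {s : ℕ} (f : Fin s → PowerSeries K)
    (hf0 : ∀ i, f i ≠ 0) (hford : ∀ i, 0 < ord K (f i))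
    (hlen : FiniteLengthQuot K (seriesAlgebra f)) (F : PowerSeries K) :
    ∃ g ∈ seriesAlgebra f, ∃ r : PowerSeries K,
      F = g + r ∧
      (g ≠ 0 → ord K F ≤ ord K g) ∧
      (r ≠ 0 → ord K F ≤ ord K r) ∧
      (∀ i : ℕ, coeff i r ≠ 0 →
        i ∉ AddSubmonoid.closure (Set.range fun j => ord K (f j))) :=
  stmt_4_general K f hf0 F
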